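/- Let A be a q×n complex matrix, W a nonzero n×q complex matrix, m a positive integer, and k = max(Ind(AW), Ind(WA)). Then A·A^{Ⓦ_m,W,†} is the oblique projector onto the range of (AW)^k along the null space of ((WA)^k)^*·(WA)^{m+1}·A^†; i.e., (A·A^{Ⓦ_m,W,†})^2 = A·A^{Ⓦ_m,W,†}, the range of A·A^{Ⓦ_m,W,†} equals the range of (AW)^k, and the null space of A·A^{Ⓦ_m,W,†} equals the null space of ((WA)^k)^*·(WA)^{m+1}·A^†. -/

import Mathlib

open Matrix

/-- Index of a square matrix: least `d` with `rank (B^d) = rank (B^(d+1))`. -/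
noncomputable def matInd {ι : Type*} [Fintype ι] [DecidableEq ι] (B : Matrix ι ι ℂ) : ℕ :=
  sInf {d : ℕ | (B ^ d).rank = (B ^ (d + 1)).rank}

/-- `X` is the Moore-Penrose inverse of `A` (four Penrose equations). -/
noncomputable def IsMP {ι κ : Type*} [Fintype ι] [Fintype κ] (A : Matrix ι κ ℂ) (X : Matrix κ ι ℂ) : Prop :=
  A * X * A = A ∧ X * A * X = X ∧ (A * X)ᴴ = A * X ∧ (X * A)ᴴ = X * A

/-- Column space (range) of a matrix. -/
noncomputable def mrange {ι κ : Type*} [Fintype κ] (M : Matrix ι κ ℂ) : Submodule ℂ (ι → ℂ) :=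
  LinearMap.range M.mulVecLin

/-- Null space of a matrix. -/
noncomputable def mker {ι κ : Type*} [Fintype κ] (M : Matrix ι κ ℂ) : Submodule ℂ (κ → ℂ) :=
  LinearMap.ker M.mulVecLin

/-- `X` is the core-EP inverse of `B`. -/
noncomputable def IsCoreEP {ι : Type*} [Fintype ι] [DecidableEq ι] (B X : Matrix ι ι ℂ) : Prop :=
  X * B * X = X ∧ mrange X = mrange (B ^ matInd B) ∧ mrange Xᴴ = mrange (B ^ matInd B)

/-- `X` is the Drazin inverse of `B`. -/
noncomputable def IsDrazin {ι : Type*} [Fintype ι] [DecidableEq ι] (B X : Matrix ι ι ℂ) : Prop :=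
  X * B * X = X ∧ B * X = X * B ∧ B ^ (matInd B + 1) * X = B ^ matInd B

/-- `X` is the group inverse of `B`. -/
noncomputable def IsGroupInv {ι : Type*} [Fintype ι] (B X : Matrix ι ι ℂ) : Prop :=
  B * X * B = B ∧ X * B * X = X ∧ B * X = X * B

/-- Frobenius norm of a matrix. -/
noncomputable def frobNorm {ι κ : Type*} [Fintype ι] [Fintype κ] (M : Matrix ι κ ℂ) : ℝ :=
  Real.sqrt (∑ i, ∑ j, ‖M i j‖ ^ 2)

/-!
Write `B = W * A` and `X = (WA)^⊕`. From `X B X = X` and `range X = range B^k`, a `B`-invariant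
subspace for `k ≥ Ind B`, the idempotents `B X` and `X B` fix `range X` and `range B^k`, so
`B X² = X` and `X B^(k+1) = B^k`. These collapse `A^{Ⓦ_m,W,†}` to `X^(m+1) B^(m+1) A^†`, and
`P = A X^(m+1) B^(m+1) A^†` is idempotent because `B^(m+1) X^(m+1) = B X`. The range of `P` lies
in `A · range X = A · range B^k ⊆ range (AW)^k`, and `P` fixes `(AW)^(k+1) = A B^k W`. The null
space of `A X^(m+1)` is that of `X`, which is that of `(B^k)^*` because `range X^* = range B^k`.
-/

section Subspaces

variable {ι κ μ : Type*} [Fintype κ] [Fintype μ]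

theorem mrange_mul (M : Matrix ι κ ℂ) (N : Matrix κ μ ℂ) :
    mrange (M * N) = (mrange N).map M.mulVecLin := by
  rw [mrange, mrange, mulVecLin_mul, LinearMap.range_comp]

theorem mrange_mul_le (M : Matrix ι κ ℂ) (N : Matrix κ μ ℂ) : mrange (M * N) ≤ mrange M := by
  rw [mrange, mrange, mulVecLin_mul]
  exact LinearMap.range_comp_le_range _ _

theorem mker_mul (M : Matrix ι κ ℂ) (N : Matrix κ μ ℂ) :
    mker (M * N) = (mker M).comap N.mulVecLin := by
  rw [mker, mker, mulVecLin_mul, LinearMap.ker_comp]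

theorem mker_le_mker_mul (M : Matrix ι κ ℂ) (N : Matrix κ μ ℂ) : mker N ≤ mker (M * N) := by
  rw [mker, mker, mulVecLin_mul]
  exact LinearMap.ker_le_ker_comp _ _

theorem exists_eq_mul_of_mrange_le {M : Matrix ι μ ℂ} {N : Matrix ι κ ℂ}
    (h : mrange M ≤ mrange N) : ∃ Z : Matrix κ μ ℂ, M = N * Z := by
  classical
  choose z hz using fun j => h ⟨Pi.single j 1, rfl⟩
  refine ⟨(Matrix.of z)ᵀ, ext_of_mulVec_single fun j => ?_⟩
  rw [← mulVec_mulVec, mulVec_single_one]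
  simpa using (hz j).symm

theorem mul_eq_self_of_mrange_le [Fintype ι] {P : Matrix ι ι ℂ} {N : Matrix ι μ ℂ}
    (hP : IsIdempotentElem P) (h : mrange N ≤ mrange P) : P * N = N := by
  obtain ⟨Z, rfl⟩ := exists_eq_mul_of_mrange_le h
  rw [← Matrix.mul_assoc, hP.eq]

theorem mker_le_mker_of_mrange_conjTranspose_le [Fintype ι] {M : Matrix ι κ ℂ}
    {N : Matrix μ κ ℂ} (h : mrange Mᴴ ≤ mrange Nᴴ) : mker N ≤ mker M := by
  obtain ⟨Z, hZ⟩ := exists_eq_mul_of_mrange_le h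
  rw [← conjTranspose_conjTranspose M, hZ, conjTranspose_mul, conjTranspose_conjTranspose]
  exact mker_le_mker_mul _ _

theorem mker_eq_of_mrange_conjTranspose_eq [Fintype ι] {M : Matrix ι κ ℂ} {N : Matrix μ κ ℂ}
    (h : mrange Mᴴ = mrange Nᴴ) : mker M = mker N :=
  le_antisymm (mker_le_mker_of_mrange_conjTranspose_le h.ge)
    (mker_le_mker_of_mrange_conjTranspose_le h.le)

end Subspaces

section Index

variable {ι : Type*} [Fintype ι] [DecidableEq ι] (B : Matrix ι ι ℂ)

theorem exists_rank_pow_eq_rank_pow_succ : ∃ d, (B ^ d).rank = (B ^ (d + 1)).rank := by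
  let rk := fun e => (B ^ e).rank
  refine ⟨Function.argmin rk, le_antisymm (Function.argmin_le rk _) ?_⟩
  rw [pow_succ]
  exact rank_mul_le_left _ _

theorem rank_pow_matInd_eq : (B ^ matInd B).rank = (B ^ (matInd B + 1)).rank :=
  Nat.sInf_mem (exists_rank_pow_eq_rank_pow_succ B)

theorem mrange_pow_eq_of_matInd_le {j : ℕ} (hj : matInd B ≤ j) :
    mrange (B ^ j) = mrange (B ^ matInd B) := by
  have hsucc : mrange (B ^ (matInd B + 1)) = mrange (B ^ matInd B) := by
    refine Submodule.eq_of_le_of_finrank_le ?_ (rank_pow_matInd_eq B).le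
    rw [pow_succ]
    exact mrange_mul_le _ _
  induction j, hj using Nat.le_induction with
  | base => rfl
  | succ j _ ih => rw [pow_succ', mrange_mul, ih, ← mrange_mul, ← pow_succ', hsucc]

end Index

namespace IsCoreEP

variable {ι : Type*} [Fintype ι] [DecidableEq ι] {B X : Matrix ι ι ℂ}

theorem mrange_eq (hX : IsCoreEP B X) {j : ℕ} (hj : matInd B ≤ j) :
    mrange X = mrange (B ^ j) := by
  rw [hX.2.1, mrange_pow_eq_of_matInd_le B hj]

theorem mker_eq (hX : IsCoreEP B X) {j : ℕ} (hj : matInd B ≤ j) :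
    mker X = mker ((B ^ j)ᴴ) := by
  apply mker_eq_of_mrange_conjTranspose_eq
  rw [conjTranspose_conjTranspose, hX.2.2, mrange_pow_eq_of_matInd_le B hj]

theorem mul_mul_self (hX : IsCoreEP B X) : B * (X * X) = X := by
  have hBX : IsIdempotentElem (B * X) := by
    rw [IsIdempotentElem, Matrix.mul_assoc, ← Matrix.mul_assoc X, hX.1]
  rw [← Matrix.mul_assoc]
  refine mul_eq_self_of_mrange_le hBX (le_of_eq ?_)
  calc mrange X = mrange (B ^ (matInd B + 1)) := hX.mrange_eq (Nat.le_succ _)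
    _ = mrange (B * X) := by rw [pow_succ', mrange_mul, mrange_mul, hX.mrange_eq le_rfl]

theorem mul_pow_add_two (hX : IsCoreEP B X) (j : ℕ) : B * X ^ (j + 2) = X ^ (j + 1) := by
  rw [pow_succ', pow_succ', ← Matrix.mul_assoc, ← Matrix.mul_assoc, Matrix.mul_assoc B,
    hX.mul_mul_self, ← pow_succ']

theorem pow_succ_mul_pow_succ (hX : IsCoreEP B X) (i : ℕ) :
    B ^ (i + 1) * X ^ (i + 1) = B * X := by
  induction i with
  | zero => simp
  | succ i ih => rw [pow_succ, Matrix.mul_assoc, hX.mul_pow_add_two, ih]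

theorem mul_pow_succ (hX : IsCoreEP B X) {j : ℕ} (hj : matInd B ≤ j) :
    X * B ^ (j + 1) = B ^ j := by
  have hXB : IsIdempotentElem (X * B) := by
    rw [IsIdempotentElem, ← Matrix.mul_assoc, hX.1]
  rw [pow_succ', ← Matrix.mul_assoc]
  refine mul_eq_self_of_mrange_le hXB ?_
  calc mrange (B ^ j) = mrange (X * B * X) := by rw [hX.1, hX.mrange_eq hj]
    _ ≤ mrange (X * B) := mrange_mul_le _ _

theorem pow_mul_pow_add (hX : IsCoreEP B X) (i : ℕ) {j : ℕ} (hj : matInd B ≤ j) :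
    X ^ i * B ^ (i + j) = B ^ j := by
  induction i generalizing j with
  | zero => simp
  | succ i ih =>
    rw [pow_succ, Matrix.mul_assoc, add_right_comm, hX.mul_pow_succ (by omega), ih hj]

end IsCoreEP

section Weighted

variable {ι κ : Type*} [Fintype ι] [Fintype κ] [DecidableEq κ]
  {A : Matrix ι κ ℂ} {W : Matrix κ ι ℂ} {Adag : Matrix κ ι ℂ} {X : Matrix κ κ ℂ}

theorem mul_pow_mul_comm [DecidableEq ι] (A : Matrix ι κ ℂ) (W : Matrix κ ι ℂ) (j : ℕ) :
    A * (W * A) ^ j = (A * W) ^ j * A := by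
  induction j with
  | zero => simp
  | succ j ih => rw [pow_succ, ← Matrix.mul_assoc, ih, pow_succ, Matrix.mul_assoc,
      Matrix.mul_assoc, Matrix.mul_assoc]

theorem pow_succ_mul_pinv_mul (hA : A * Adag * A = A) (i : ℕ) :
    (W * A) ^ (i + 1) * Adag * A = (W * A) ^ (i + 1) := by
  simp only [pow_succ, Matrix.mul_assoc]
  rw [← Matrix.mul_assoc A Adag A, hA]

theorem pow_mul_mul_pow_succ [DecidableEq ι] (hX : X * (W * A) * X = X) (m j : ℕ) :
    (A * (X * X) * W) ^ m * (A * X ^ (j + 1)) = A * X ^ (m + j + 1) := by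
  rw [← Matrix.mul_assoc X W A] at hX
  induction m generalizing j with
  | zero => simp
  | succ m ih =>
    have hstep : A * (X * X) * W * (A * X ^ (j + 1)) = A * X ^ (j + 1 + 1) :=
      calc A * (X * X) * W * (A * X ^ (j + 1)) = A * (X * ((X * W * A * X) * X ^ j)) := by
            rw [pow_succ']
            simp only [Matrix.mul_assoc]
        _ = A * X ^ (j + 1 + 1) := by rw [hX, pow_succ' X (j + 1), pow_succ' X j]
    rw [pow_succ, Matrix.mul_assoc, hstep, ih, add_right_comm m 1, add_assoc m j 1]

-- `W * AWGm * W * A * Adag` is the paper's `A^{Ⓦ_m,W,†}`, with `X = (WA)^⊕`.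
theorem weightedMWGMP_eq [DecidableEq ι] (hX : IsCoreEP (W * A) X) (m : ℕ) :
    W * ((A * (X * X) * W) ^ m * (A * (X * X)) * (W * A) ^ m) * W * A * Adag =
      X ^ (m + 1) * (W * A) ^ (m + 1) * Adag := by
  have hAWGm : (A * (X * X) * W) ^ m * (A * (X * X)) = A * X ^ (m + 1 + 1) := by
    simpa [sq] using pow_mul_mul_pow_succ hX.1 m 1
  calc W * ((A * (X * X) * W) ^ m * (A * (X * X)) * (W * A) ^ m) * W * A * Adag
      = (W * A) * X ^ (m + 2) * ((W * A) ^ m * (W * A)) * Adag := by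
        rw [hAWGm]
        simp only [Matrix.mul_assoc]
    _ = X ^ (m + 1) * (W * A) ^ (m + 1) * Adag := by rw [← pow_succ, hX.mul_pow_add_two]

theorem isIdempotentElem_mul_pow_mul_pow_mul (hA : A * Adag * A = A) (hX : IsCoreEP (W * A) X)
    (m : ℕ) : IsIdempotentElem (A * (X ^ (m + 1) * (W * A) ^ (m + 1) * Adag)) := by
  rw [IsIdempotentElem]
  calc A * (X ^ (m + 1) * (W * A) ^ (m + 1) * Adag) *
        (A * (X ^ (m + 1) * (W * A) ^ (m + 1) * Adag))
      = A * (X ^ (m + 1) * (((W * A) ^ (m + 1) * Adag * A) * X ^ (m + 1)) * (W * A) ^ (m + 1)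
          * Adag) := by simp only [Matrix.mul_assoc]
    _ = A * (X ^ m * (X * (W * A) * X) * (W * A) ^ (m + 1) * Adag) := by
        rw [pow_succ_mul_pinv_mul hA, hX.pow_succ_mul_pow_succ, pow_succ]
        simp only [Matrix.mul_assoc]
    _ = A * (X ^ (m + 1) * (W * A) ^ (m + 1) * Adag) := by rw [hX.1, ← pow_succ]

theorem mrange_mul_pow_mul_pow_mul [DecidableEq ι] (hA : A * Adag * A = A)
    (hX : IsCoreEP (W * A) X) (m : ℕ) {k : ℕ} (hkC : matInd (A * W) ≤ k)
    (hkB : matInd (W * A) ≤ k) :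
    mrange (A * (X ^ (m + 1) * (W * A) ^ (m + 1) * Adag)) = mrange ((A * W) ^ k) := by
  set P := A * (X ^ (m + 1) * (W * A) ^ (m + 1) * Adag)
  have hC : (A * W) ^ (k + 1) = A * (W * A) ^ k * W := by
    rw [pow_succ, ← Matrix.mul_assoc, ← mul_pow_mul_comm]
  apply le_antisymm
  · calc mrange P = mrange ((A * X) * (X ^ m * (W * A) ^ (m + 1) * Adag)) := by
          simp only [P, pow_succ' X m, Matrix.mul_assoc]
      _ ≤ mrange (A * X) := mrange_mul_le _ _
      _ = mrange (A * (W * A) ^ k) := by rw [mrange_mul, hX.mrange_eq hkB, ← mrange_mul]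
      _ = mrange ((A * W) ^ k * A) := by rw [mul_pow_mul_comm]
      _ ≤ mrange ((A * W) ^ k) := mrange_mul_le _ _
  · have hfix : P * (A * W) ^ (k + 1) = (A * W) ^ (k + 1) :=
      calc P * (A * W) ^ (k + 1)
          = A * (X ^ (m + 1) * ((W * A) ^ (m + 1) * Adag * A * (W * A) ^ k)) * W := by
            rw [hC]
            simp only [P, Matrix.mul_assoc]
        _ = (A * W) ^ (k + 1) := by
            rw [pow_succ_mul_pinv_mul hA, ← pow_add, hX.pow_mul_pow_add _ hkB, hC]
    calc mrange ((A * W) ^ k) = mrange ((A * W) ^ (k + 1)) := by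
          rw [mrange_pow_eq_of_matInd_le _ hkC,
            mrange_pow_eq_of_matInd_le _ (hkC.trans k.le_succ)]
      _ = mrange (P * (A * W) ^ (k + 1)) := by rw [hfix]
      _ ≤ mrange P := mrange_mul_le _ _

theorem mker_mul_pow_succ (hX : IsCoreEP (W * A) X) (m : ℕ) :
    mker (A * X ^ (m + 1)) = mker X := by
  refine le_antisymm ?_ (by rw [pow_succ, ← Matrix.mul_assoc]; exact mker_le_mker_mul _ _)
  have hX' : X * (W * A) ^ m * W * (A * X ^ (m + 1)) = X :=
    calc X * (W * A) ^ m * W * (A * X ^ (m + 1)) = X * ((W * A) ^ (m + 1) * X ^ (m + 1)) := by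
          rw [pow_succ (W * A) m]
          simp only [Matrix.mul_assoc]
      _ = X := by rw [hX.pow_succ_mul_pow_succ, ← Matrix.mul_assoc, hX.1]
  calc mker (A * X ^ (m + 1)) ≤ mker (X * (W * A) ^ m * W * (A * X ^ (m + 1))) :=
        mker_le_mker_mul _ _
    _ = mker X := by rw [hX']

theorem mker_mul_pow_mul_pow_mul (hX : IsCoreEP (W * A) X) (m : ℕ) {k : ℕ}
    (hkB : matInd (W * A) ≤ k) :
    mker (A * (X ^ (m + 1) * (W * A) ^ (m + 1) * Adag)) =
      mker (((W * A) ^ k)ᴴ * (W * A) ^ (m + 1) * Adag) := by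
  rw [Matrix.mul_assoc _ _ Adag, Matrix.mul_assoc ((W * A) ^ k)ᴴ, ← Matrix.mul_assoc A,
    mker_mul (A * _), mker_mul ((W * A) ^ k)ᴴ, mker_mul_pow_succ hX, hX.mker_eq hkB]

end Weighted

theorem stmt5_general {q n : ℕ} (A : Matrix (Fin q) (Fin n) ℂ) (W : Matrix (Fin n) (Fin q) ℂ)
    (m : ℕ) (k : ℕ)
    (hk : k = max (matInd (A * W)) (matInd (W * A)))
    (Adag : Matrix (Fin n) (Fin q) ℂ) (hAdag : IsMP A Adag)
    (WAcep : Matrix (Fin n) (Fin n) ℂ) (hWAcep : IsCoreEP (W * A) WAcep)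
    (AepW AWGm : Matrix (Fin q) (Fin n) ℂ) (AWGMP : Matrix (Fin n) (Fin q) ℂ)
    (hAepW : AepW = A * (WAcep * WAcep))
    (hAWGm : AWGm = (AepW * W) ^ m * AepW * (W * A) ^ m)
    (hAWGMP : AWGMP = W * AWGm * W * A * Adag) :
    (A * AWGMP) * (A * AWGMP) = A * AWGMP ∧
      mrange (A * AWGMP) = mrange ((A * W) ^ k) ∧
      mker (A * AWGMP) = mker (((W * A) ^ k)ᴴ * (W * A) ^ (m + 1) * Adag) := by
  subst hAepW hAWGm
  rw [hAWGMP, weightedMWGMP_eq hWAcep]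
  have hkC : matInd (A * W) ≤ k := hk ▸ le_max_left _ _
  have hkB : matInd (W * A) ≤ k := hk ▸ le_max_right _ _
  exact ⟨(isIdempotentElem_mul_pow_mul_pow_mul hAdag.1 hWAcep m).eq,
    mrange_mul_pow_mul_pow_mul hAdag.1 hWAcep m hkC hkB,
    mker_mul_pow_mul_pow_mul hWAcep m hkB⟩

theorem stmt5 {q n : ℕ} (A : Matrix (Fin q) (Fin n) ℂ) (W : Matrix (Fin n) (Fin q) ℂ)
    (hW : W ≠ 0) (m : ℕ) (hm : 0 < m) (k : ℕ)
    (hk : k = max (matInd (A * W)) (matInd (W * A)))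
    (Adag : Matrix (Fin n) (Fin q) ℂ) (hAdag : IsMP A Adag)
    (WAcep : Matrix (Fin n) (Fin n) ℂ) (hWAcep : IsCoreEP (W * A) WAcep)
    (AepW AWGm : Matrix (Fin q) (Fin n) ℂ) (AWGMP : Matrix (Fin n) (Fin q) ℂ)
    (hAepW : AepW = A * (WAcep * WAcep))
    (hAWGm : AWGm = (AepW * W) ^ m * AepW * (W * A) ^ m)
    (hAWGMP : AWGMP = W * AWGm * W * A * Adag) :
    (A * AWGMP) * (A * AWGMP) = A * AWGMP ∧
      mrange (A * AWGMP) = mrange ((A * W) ^ k) ∧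
      mker (A * AWGMP) = mker (((W * A) ^ k)ᴴ * (W * A) ^ (m + 1) * Adag) :=
  stmt5_general A W m k hk Adag hAdag WAcep hWAcep AepW AWGm AWGMP hAepW hAWGm hAWGMP
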